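/- lim_{δ → 0+} ( log δ + ∑_{n=1}^∞ (1/n) erfc(√(nδ)) ) = −2 log 2. -/

import Mathlib

open Real MeasureTheory Filter

/-- The complementary error function `erfc(x) = (2/√π) ∫_x^∞ e^{−u²} du`. -/
noncomputable def erfc (x : ℝ) : ℝ :=
  (2 / Real.sqrt π) * ∫ u in Set.Ioi x, Real.exp (-u^2)

/-!
Substituting `u = √t` gives `erfc √a = π^{-1/2} ∫_a^∞ e^{-t} t^{-1/2} dt`, so exchanging sum and
integral turns the series into `π^{-1/2} ∫_0^∞ e^{-t} t^{-1/2} H_{⌊t/δ⌋} dt`, with `H_m` the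
harmonic numbers. As `δ → 0⁺`, `H_{⌊t/δ⌋} + log δ → γ + log t` under the bound `1 + |log t|`, so
by dominated convergence the limit is `π^{-1/2} (γ Γ(1/2) + Γ'(1/2)) = γ + ψ(1/2) = -2 log 2`.
-/

open Set Topology

section HarmonicFloor

variable {δ t : ℝ}

lemma add_one_mul_le_iff_lt_floor_div (hδ : 0 < δ) (n : ℕ) :
    (n + 1) * δ ≤ t ↔ n < ⌊t / δ⌋₊ := by
  rw [← Nat.add_one_le_iff, Nat.le_floor_iff' n.succ_ne_zero, le_div_iff₀ hδ]
  push_cast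
  rfl

lemma hasSum_indicator_Ici_harmonic_floor_div (hδ : 0 < δ) (t : ℝ) :
    HasSum (fun n : ℕ => (Ici ((n + 1) * δ)).indicator (fun _ => 1 / (n + 1 : ℝ)) t)
      (harmonic ⌊t / δ⌋₊) := by
  have hsupp (n : ℕ) : t ∈ Ici ((n + 1) * δ) ↔ n ∈ Finset.range ⌊t / δ⌋₊ := by
    rw [mem_Ici, Finset.mem_range, add_one_mul_le_iff_lt_floor_div hδ]
  have hsum : (harmonic ⌊t / δ⌋₊ : ℝ) = ∑ n ∈ Finset.range ⌊t / δ⌋₊,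
      (Ici ((n + 1) * δ)).indicator (fun _ => 1 / (n + 1 : ℝ)) t := by
    rw [harmonic, Rat.cast_sum]
    refine Finset.sum_congr rfl fun n hn => ?_
    rw [indicator_of_mem ((hsupp n).2 hn)]
    push_cast
    ring
  rw [hsum]
  exact hasSum_sum_of_ne_finset_zero fun n hn => indicator_of_notMem (mt (hsupp n).1 hn) _

lemma abs_harmonic_floor_div_add_log_le (hδ : 0 < δ) (hδ1 : δ ≤ 1) (ht : 0 < t) :
    |(harmonic ⌊t / δ⌋₊ : ℝ) + log δ| ≤ 1 + |log t| := by
  have hlog_div : log (t / δ) = log t - log δ := log_div ht.ne' hδ.ne'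
  have hlower : log t - log δ ≤ harmonic ⌊t / δ⌋₊ :=
    hlog_div ▸ log_le_harmonic_floor _ (div_pos ht hδ).le
  rw [abs_le]
  refine ⟨by linarith [neg_abs_le (log t)], ?_⟩
  rcases lt_or_ge t δ with h | h
  · rw [Nat.floor_eq_zero.2 ((div_lt_one hδ).2 h)]
    simp only [harmonic_zero, Rat.cast_zero, zero_add]
    linarith [log_nonpos hδ.le hδ1, abs_nonneg (log t)]
  · linarith [hlog_div ▸ harmonic_floor_le_one_add_log _ ((one_le_div hδ).2 h),
      le_abs_self (log t)]

lemma tendsto_harmonic_floor_div_add_log (ht : 0 < t) :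
    Tendsto (fun δ => (harmonic ⌊t / δ⌋₊ : ℝ) + log δ) (𝓝[>] 0)
      (𝓝 (eulerMascheroniConstant + log t)) := by
  have hdiv : Tendsto (fun δ : ℝ => t / δ) (𝓝[>] 0) atTop :=
    (tendsto_inv_nhdsGT_zero.const_mul_atTop ht).congr fun δ => (div_eq_mul_inv t δ).symm
  have hfloor : Tendsto (fun δ : ℝ => ⌊t / δ⌋₊) (𝓝[>] 0) atTop :=
    tendsto_nat_floor_atTop.comp hdiv
  have hfloor_mul : Tendsto (fun δ : ℝ => (⌊t / δ⌋₊ : ℝ) * δ) (𝓝[>] 0) (𝓝 t) := by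
    have hlow : Tendsto (fun δ : ℝ => t - δ) (𝓝[>] 0) (𝓝 t) := by
      have : Tendsto (fun δ : ℝ => t - δ) (𝓝 0) (𝓝 (t - 0)) := tendsto_const_nhds.sub tendsto_id
      simpa using this.mono_left nhdsWithin_le_nhds
    refine tendsto_of_tendsto_of_tendsto_of_le_of_le' hlow tendsto_const_nhds ?_ ?_ <;>
      filter_upwards [self_mem_nhdsWithin] with δ (hδ : 0 < δ)
    · have := Nat.lt_floor_add_one (t / δ)
      rw [div_lt_iff₀ hδ] at this
      linarith
    · exact (le_div_iff₀ hδ).1 (Nat.floor_le (div_pos ht hδ).le)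
  have hsum := (tendsto_harmonic_sub_log.comp hfloor).add
    ((continuousAt_log ht.ne').tendsto.comp hfloor_mul)
  refine hsum.congr' ?_
  filter_upwards [Ioo_mem_nhdsGT ht] with δ ⟨hδ, hδt⟩
  have hfloor_pos : (0 : ℝ) < ⌊t / δ⌋₊ := by
    exact_mod_cast Nat.floor_pos.2 ((one_le_div hδ).2 hδt.le)
  simp only [Function.comp_apply, log_mul hfloor_pos.ne' hδ.ne']
  ring

end HarmonicFloor

section SeriesIntegral

variable {f : ℝ → ℝ} {δ : ℝ}

lemma measurable_harmonic_floor_div (δ : ℝ) : Measurable fun t : ℝ => (harmonic ⌊t / δ⌋₊ : ℝ) :=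
  (measurable_from_nat (f := fun n : ℕ => (harmonic n : ℝ))).comp
    (Nat.measurable_floor.comp (measurable_id.div_const δ))

lemma hasSum_one_div_mul_integral_Ici (hδ : 0 < δ)
    (hfm : AEStronglyMeasurable f (volume.restrict (Ioi 0)))
    (hfH : IntegrableOn (fun t => f t * harmonic ⌊t / δ⌋₊) (Ioi 0)) :
    HasSum (fun n : ℕ => 1 / (n + 1 : ℝ) * ∫ t in Ici ((n + 1) * δ), f t)
      (∫ t in Ioi 0, f t * harmonic ⌊t / δ⌋₊) := by
  set c : ℕ → ℝ → ℝ := fun n => (Ici ((n + 1) * δ)).indicator fun _ => 1 / (n + 1 : ℝ)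
  have hc_nonneg (n : ℕ) (t : ℝ) : 0 ≤ c n t := indicator_nonneg (fun _ _ => by positivity) t
  have hc_sum (t : ℝ) : HasSum (c · t) (harmonic ⌊t / δ⌋₊) :=
    hasSum_indicator_Ici_harmonic_floor_div hδ t
  have hterm (n : ℕ) :
      ∫ t in Ioi 0, f t * c n t = 1 / (n + 1 : ℝ) * ∫ t in Ici ((n + 1) * δ), f t := by
    have hsub : Ioi 0 ∩ Ici ((n + 1) * δ) = Ici ((n + 1) * δ) :=
      inter_eq_self_of_subset_right (Ici_subset_Ioi.2 (by positivity))
    simp only [c, ← indicator_mul_right]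
    rw [setIntegral_indicator measurableSet_Ici, hsub, integral_mul_const, mul_comm]
  simp only [← hterm]
  refine hasSum_integral_of_dominated_convergence (fun n t => ‖f t‖ * c n t)
    (fun n => hfm.mul ((measurable_const.indicator measurableSet_Ici).aestronglyMeasurable))
    (fun n => ae_of_all _ fun t => by rw [norm_mul, Real.norm_of_nonneg (hc_nonneg n t)])
    (ae_of_all _ fun t => ((hc_sum t).mul_left _).summable) ?_
    (ae_of_all _ fun t => (hc_sum t).mul_left (f t))
  refine hfH.norm.congr (ae_of_all _ fun t => ?_)
  dsimp only
  rw [((hc_sum t).mul_left _).tsum_eq, norm_mul,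
    Real.norm_of_nonneg (HasSum.nonneg (hc_nonneg · t) (hc_sum t))]

lemma norm_mul_harmonic_floor_div_add_log_le (hδ : 0 < δ) (hδ1 : δ ≤ 1) {t : ℝ} (ht : 0 < t) :
    ‖f t * ((harmonic ⌊t / δ⌋₊ : ℝ) + log δ)‖ ≤ ‖f t‖ + ‖f t * log t‖ := by
  rw [norm_mul, norm_mul, ← mul_one_add]
  exact mul_le_mul_of_nonneg_left (abs_harmonic_floor_div_add_log_le hδ hδ1 ht) (norm_nonneg _)

variable (hf : IntegrableOn f (Ioi 0)) (hflog : IntegrableOn (fun t => f t * log t) (Ioi 0))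
include hf hflog

lemma integrableOn_mul_harmonic_floor_div_add_log (hδ : 0 < δ) (hδ1 : δ ≤ 1) :
    IntegrableOn (fun t => f t * ((harmonic ⌊t / δ⌋₊ : ℝ) + log δ)) (Ioi 0) :=
  (hf.norm.add hflog.norm).mono'
    (hf.aestronglyMeasurable.mul
      ((measurable_harmonic_floor_div δ).add_const _).aestronglyMeasurable)
    ((ae_restrict_iff' measurableSet_Ioi).2 (ae_of_all _ fun _ ht =>
      norm_mul_harmonic_floor_div_add_log_le hδ hδ1 ht))

lemma tendsto_integral_mul_harmonic_floor_div_add_log :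
    Tendsto (fun δ => ∫ t in Ioi 0, f t * ((harmonic ⌊t / δ⌋₊ : ℝ) + log δ)) (𝓝[>] 0)
      (𝓝 (∫ t in Ioi 0, f t * (eulerMascheroniConstant + log t))) := by
  refine tendsto_integral_filter_of_dominated_convergence (fun t => ‖f t‖ + ‖f t * log t‖) ?_ ?_
    (hf.norm.add hflog.norm) ?_
  · filter_upwards [Ioc_mem_nhdsGT zero_lt_one] with δ ⟨hδ, hδ1⟩
    exact (integrableOn_mul_harmonic_floor_div_add_log hf hflog hδ hδ1).aestronglyMeasurable
  · filter_upwards [Ioc_mem_nhdsGT zero_lt_one] with δ ⟨hδ, hδ1⟩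
    exact (ae_restrict_iff' measurableSet_Ioi).2 (ae_of_all _ fun _ ht =>
      norm_mul_harmonic_floor_div_add_log_le hδ hδ1 ht)
  · exact (ae_restrict_iff' measurableSet_Ioi).2 (ae_of_all _ fun t ht =>
      (tendsto_harmonic_floor_div_add_log ht).const_mul (f t))

theorem tendsto_log_mul_integral_add_tsum_integral_Ici :
    Tendsto (fun δ => log δ * (∫ t in Ioi 0, f t) +
        ∑' n : ℕ, 1 / (n + 1 : ℝ) * ∫ t in Ici ((n + 1) * δ), f t) (𝓝[>] 0)
      (𝓝 (eulerMascheroniConstant * (∫ t in Ioi 0, f t) + ∫ t in Ioi 0, f t * log t)) := by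
  have hlim : ∫ t in Ioi 0, f t * (eulerMascheroniConstant + log t)
      = eulerMascheroniConstant * (∫ t in Ioi 0, f t) + ∫ t in Ioi 0, f t * log t := by
    simp only [mul_add]
    rw [integral_add (hf.mul_const _) hflog, integral_mul_const, mul_comm]
  rw [← hlim]
  refine (tendsto_integral_mul_harmonic_floor_div_add_log hf hflog).congr' ?_
  filter_upwards [Ioc_mem_nhdsGT zero_lt_one] with δ ⟨hδ, hδ1⟩
  have hfH : IntegrableOn (fun t => f t * harmonic ⌊t / δ⌋₊) (Ioi 0) :=
    ((integrableOn_mul_harmonic_floor_div_add_log hf hflog hδ hδ1).sub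
      (hf.mul_const (log δ))).congr_fun (fun t _ => by simp only [Pi.sub_apply]; ring)
      measurableSet_Ioi
  simp only [mul_add]
  rw [integral_add hfH (hf.mul_const _), integral_mul_const,
    (hasSum_one_div_mul_integral_Ici hδ hf.aestronglyMeasurable hfH).tsum_eq]
  ring

end SeriesIntegral

lemma abs_log_le_rpow_add_rpow_neg_div {t ε : ℝ} (ht : 0 < t) (hε : 0 < ε) :
    |log t| ≤ (t ^ ε + t ^ (-ε)) / ε := by
  rw [add_div]
  rcases le_or_gt 1 t with h | h
  · rw [abs_of_nonneg (log_nonneg h)]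
    linarith [log_le_rpow_div ht.le hε, (by positivity : 0 ≤ t ^ (-ε) / ε)]
  · have := log_le_rpow_div (inv_nonneg.2 ht.le) hε
    rw [log_inv, inv_rpow ht.le, ← rpow_neg ht.le] at this
    rw [abs_of_neg (log_neg ht h)]
    linarith [(by positivity : 0 ≤ t ^ ε / ε)]

lemma integrableOn_exp_neg_mul_rpow_mul_log {s : ℝ} (hs : 0 < s) :
    IntegrableOn (fun t => exp (-t) * t ^ (s - 1) * log t) (Ioi 0) := by
  have hbound := ((GammaIntegral_convergent (by linarith : 0 < s + s / 2)).add
    (GammaIntegral_convergent (by linarith : 0 < s - s / 2))).div_const (s / 2)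
  refine hbound.mono' (by fun_prop)
    ((ae_restrict_iff' measurableSet_Ioi).2 (ae_of_all _ fun t (ht : 0 < t) => ?_))
  have hsplit (ε : ℝ) : t ^ (s + ε - 1) = t ^ (s - 1) * t ^ ε := by
    rw [← rpow_add ht]; ring_nf
  rw [Pi.add_apply, norm_mul, Real.norm_of_nonneg (by positivity), Real.norm_eq_abs,
    sub_eq_add_neg s (s / 2), hsplit, hsplit]
  calc exp (-t) * t ^ (s - 1) * |log t|
      ≤ exp (-t) * t ^ (s - 1) * ((t ^ (s / 2) + t ^ (-(s / 2))) / (s / 2)) := by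
        gcongr
        exact abs_log_le_rpow_add_rpow_neg_div ht (by positivity)
    _ = _ := by ring

lemma hasDerivAt_Gamma_integral_mul_log {s : ℝ} (hs : 0 < s) :
    HasDerivAt Gamma (∫ t in Ioi 0, exp (-t) * t ^ (s - 1) * log t) s := by
  have hGamma : (fun x : ℝ => (Complex.GammaIntegral x).re) =ᶠ[𝓝 s] Gamma := by
    filter_upwards [eventually_gt_nhds hs] with x hx
    rw [← Complex.Gamma_eq_integral (by simpa using hx), Complex.Gamma_ofReal, Complex.ofReal_re]
  have hderiv : ∫ t : ℝ in Ioi 0, (t : ℂ) ^ ((s : ℂ) - 1) * (log t * exp (-t))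
      = ((∫ t in Ioi 0, exp (-t) * t ^ (s - 1) * log t : ℝ) : ℂ) := by
    rw [← integral_complex_ofReal]
    refine setIntegral_congr_fun measurableSet_Ioi fun t (ht : 0 < t) => ?_
    rw [← Complex.ofReal_one, ← Complex.ofReal_sub, ← Complex.ofReal_cpow ht.le]
    push_cast
    ring
  have := (Complex.hasDerivAt_GammaIntegral (by simpa using hs)).real_of_complex
  rw [hderiv, Complex.ofReal_re] at this
  exact this.congr_of_eventuallyEq hGamma.symm

lemma erfc_sqrt_eq_integral {a : ℝ} (ha : 0 ≤ a) :
    erfc √a = (√π)⁻¹ * ∫ t in Ioi a, exp (-t) * t ^ ((1 / 2 : ℝ) - 1) := by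
  have hsqrt_image : sqrt '' Ioi a = Ioi √a := by
    ext y
    refine ⟨fun ⟨x, hx, hxy⟩ => hxy ▸ sqrt_lt_sqrt ha hx, fun hy => ?_⟩
    exact ⟨y ^ 2, lt_sq_of_sqrt_lt hy, sqrt_sq ((sqrt_nonneg a).trans hy.le)⟩
  have hsubst : ∫ u in Ioi √a, exp (-u ^ 2)
      = ∫ t in Ioi a, |1 / (2 * √t)| • exp (-(√t) ^ 2) := by
    rw [← hsqrt_image]
    exact integral_image_eq_integral_abs_deriv_smul measurableSet_Ioi
      (fun x (hx : a < x) => (hasDerivAt_sqrt (ha.trans_lt hx).ne').hasDerivWithinAt)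
      (fun x (hx : a < x) y (hy : a < y) hxy =>
        (sqrt_inj (ha.trans hx.le) (ha.trans hy.le)).1 hxy) _
  have hintegrand : ∀ t ∈ Ioi a, |1 / (2 * √t)| • exp (-(√t) ^ 2)
      = 1 / 2 * (exp (-t) * t ^ ((1 / 2 : ℝ) - 1)) := by
    intro t (ht : a < t)
    have ht0 : 0 < t := ha.trans_lt ht
    rw [sq_sqrt ht0.le, smul_eq_mul, abs_of_nonneg (by positivity),
      show (1 / 2 : ℝ) - 1 = -(1 / 2) by norm_num, rpow_neg ht0.le, ← sqrt_eq_rpow]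
    ring
  rw [erfc, hsubst, setIntegral_congr_fun measurableSet_Ioi hintegrand, integral_const_mul]
  field_simp

/-- `lim_{δ → 0+} ( log δ + ∑_{n≥1} (1/n) erfc(√(nδ)) ) = −2 log 2`. -/
theorem erfc_series_log_limit :
    Tendsto (fun δ : ℝ =>
        Real.log δ + ∑' n : ℕ, (1/(n+1 : ℝ)) * erfc (Real.sqrt ((n+1) * δ)))
      (nhdsWithin 0 (Set.Ioi 0)) (nhds (-2 * Real.log 2)) := by
  have hf := GammaIntegral_convergent one_half_pos
  have hflog := integrableOn_exp_neg_mul_rpow_mul_log one_half_pos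
  have hintegral : ∫ t in Ioi 0, exp (-t) * t ^ ((1 / 2 : ℝ) - 1) = √π := by
    rw [← Gamma_eq_integral one_half_pos, Gamma_one_half_eq]
  have hintegral_log : ∫ t in Ioi 0, exp (-t) * t ^ ((1 / 2 : ℝ) - 1) * log t
      = -√π * (eulerMascheroniConstant + 2 * log 2) :=
    (hasDerivAt_Gamma_integral_mul_log one_half_pos).unique hasDerivAt_Gamma_one_half
  have hlim := (tendsto_log_mul_integral_add_tsum_integral_Ici hf hflog).const_mul (√π)⁻¹
  have hπ : √π ≠ 0 := (sqrt_pos.2 pi_pos).ne'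
  rw [hintegral, hintegral_log, show (√π)⁻¹ * (eulerMascheroniConstant * √π
    + -√π * (eulerMascheroniConstant + 2 * log 2)) = -2 * log 2 by field_simp; ring] at hlim
  refine hlim.congr' (eventually_mem_nhdsWithin.mono fun δ (hδ : 0 < δ) => ?_)
  dsimp only
  rw [mul_add, mul_comm (log δ), inv_mul_cancel_left₀ hπ, ← tsum_mul_left]
  refine congrArg _ (tsum_congr fun n => ?_)
  rw [erfc_sqrt_eq_integral (by positivity), integral_Ici_eq_integral_Ioi]
  ring
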